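/- arXiv:2507.18466 — 2 statements merged into one kernel-verified Lean document; each statement's English description precedes it below -/
import Mathlib

section
/- Let A ∈ ℝ^{m×n} with rank n, A_p := A R⁻¹ for invertible R, and x*, y* as in the exact preconditioned normal equations (A_pᵀA_p y* = A_pᵀ b, R x* = y*). Let E_p ∈ ℝ^{m×n}, ε := ‖E_p‖/‖A_p‖, and suppose ŷ ≠ 0, x̂ ≠ 0 satisfy (A_p+E_p)ᵀ(A_p+E_p) ŷ = (A_p+E_p)ᵀ b and R x̂ = ŷ. Then ‖x* - x̂‖/‖x̂‖ ≤ κ(R) · ν · κ(A_p)² · ε · ( ‖b - A_p ŷ‖/(‖A_p‖‖ŷ‖) + 1 + ε ), where ν := ‖R x̂‖/(‖R‖‖x̂‖) ≤ 1. -/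
open Matrix
open scoped Matrix.Norms.L2Operator

/-- The `j`-th largest singular value of a real matrix. -/
noncomputable def sval {m n : ℕ} (M : Matrix (Fin m) (Fin n) ℝ) (j : Fin n) : ℝ :=
  Real.sqrt ((((Finset.univ.val.map
    (show (Mᵀ * M).IsHermitian by
      simpa [Matrix.conjTranspose_eq_transpose_of_trivial] using
        Matrix.isHermitian_conjTranspose_mul_self M).eigenvalues).sort (· ≥ ·)).getD j 0))

/-- Two-norm condition number `σ₁ / σₙ`. -/
noncomputable def condNum {m n : ℕ} (M : Matrix (Fin m) (Fin (n+1)) ℝ) : ℝ :=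
  sval M 0 / sval M (Fin.last n)

/-- Euclidean norm of a vector. -/
noncomputable def e2norm {k : ℕ} (x : Fin k → ℝ) : ℝ := Real.sqrt (∑ i, (x i)^2)

noncomputable def en {k : ℕ} (x : Fin k → ℝ) : EuclideanSpace ℝ (Fin k) :=
  (WithLp.equiv 2 (Fin k → ℝ)).symm x

lemma e2norm_eq {k : ℕ} (x : Fin k → ℝ) : e2norm x = ‖en x‖ := by
  rw [EuclideanSpace.norm_eq, e2norm]
  congr 1
  refine Finset.sum_congr rfl fun i _ => ?_
  rw [Real.norm_eq_abs, sq_abs]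
  rfl

lemma e2norm_nonneg {k : ℕ} (x : Fin k → ℝ) : 0 ≤ e2norm x := by
  rw [e2norm_eq]; exact norm_nonneg _

lemma e2norm_sub_le {k : ℕ} (a b : Fin k → ℝ) : e2norm (a - b) ≤ e2norm a + e2norm b := by
  simp only [e2norm_eq]
  exact (norm_sub_le (en a) (en b))

lemma e2norm_mulVec_le {k l : ℕ} (A : Matrix (Fin k) (Fin l) ℝ) (x : Fin l → ℝ) :
    e2norm (A *ᵥ x) ≤ ‖A‖ * e2norm x := by
  simp only [e2norm_eq]
  exact A.l2_opNorm_mulVec (en x)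

lemma e2norm_pos {k : ℕ} {x : Fin k → ℝ} (hx : x ≠ 0) : 0 < e2norm x := by
  rw [e2norm_eq, norm_pos_iff]
  intro h; apply hx; simpa [en] using h

lemma rhs_eq (Rn Ri a p e ρ y x : ℝ) (hR0 : Rn ≠ 0) (hA0 : a ≠ 0) (hy0 : y ≠ 0)
    (hx0 : x ≠ 0) :
    Rn * Ri * (y / (Rn * x)) * (a * p) ^ 2 * (e / a) * (ρ / (a * y) + 1 + e / a)
      = Ri * (p * p * e * (ρ + a * y + e * y)) / x := by
  field_simp

theorem stmt10 {m n : ℕ} (A : Matrix (Fin m) (Fin n) ℝ)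
    (R : Matrix (Fin n) (Fin n) ℝ) (Ep : Matrix (Fin m) (Fin n) ℝ)
    (b : Fin m → ℝ) (hrank : A.rank = n) (hR : IsUnit R.det)
    (Ap : Matrix (Fin m) (Fin n) ℝ) (hAp : Ap = A * R⁻¹)
    (ys xs yh xh : Fin n → ℝ)
    (hys : (Apᵀ * Ap) *ᵥ ys = Apᵀ *ᵥ b) (hxs : R *ᵥ xs = ys)
    (ε : ℝ) (hε : ε = ‖Ep‖ / ‖Ap‖)
    (hyh : ((Ap + Ep)ᵀ * (Ap + Ep)) *ᵥ yh = (Ap + Ep)ᵀ *ᵥ b)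
    (hxh : R *ᵥ xh = yh) (hyne : yh ≠ 0) (hne : xh ≠ 0)
    (ν κR κAp : ℝ) (hν : ν = e2norm (R *ᵥ xh) / (‖R‖ * e2norm xh))
    (hκR : κR = ‖R‖ * ‖R⁻¹‖) (hκAp : κAp = ‖Ap‖ * ‖(Apᵀ * Ap)⁻¹ * Apᵀ‖) :
    ν ≤ 1 ∧
    e2norm (xs - xh) / e2norm xh ≤
      κR * ν * κAp^2 * ε * (e2norm (b - Ap *ᵥ yh) / (‖Ap‖ * e2norm yh) + 1 + ε) := by
  -- nontriviality
  have hn0 : 0 < n := by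
    rcases Nat.eq_zero_or_pos n with h | h
    · subst h; exact absurd (funext fun i => i.elim0) hyne
    · exact h
  have hne1 : Nonempty (Fin n) := ⟨⟨0, hn0⟩⟩
  have hNT : Nontrivial (Matrix (Fin n) (Fin n) ℝ) := inferInstance
  -- invertibility of the Gram matrix
  have hrankAp : Ap.rank = n := by
    rw [hAp, Matrix.rank_mul_eq_left_of_isUnit_det _ _ (Matrix.isUnit_nonsing_inv_det R hR),
      hrank]
  have hUdet : IsUnit (Apᵀ * Ap).det := by
    have h1 : (Apᵀ * Ap).rank = n := by rw [Matrix.rank_transpose_mul_self, hrankAp]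
    have h2 : LinearMap.range (Apᵀ * Ap).mulVecLin = ⊤ := by
      apply Submodule.eq_top_of_finrank_eq
      rw [← Matrix.rank, h1, Module.finrank_fin_fun]
    have h3 : Function.Surjective ((Apᵀ * Ap).mulVec) := by
      have := LinearMap.range_eq_top.mp h2
      intro v
      obtain ⟨w, hw⟩ := this v
      exact ⟨w, hw⟩
    exact (Matrix.isUnit_iff_isUnit_det _).mp (Matrix.mulVec_surjective_iff_isUnit.mp h3)
  have hMinv : (Apᵀ * Ap)⁻¹ * (Apᵀ * Ap) = 1 := Matrix.nonsing_inv_mul _ hUdet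
  have hMinvR : (Apᵀ * Ap) * (Apᵀ * Ap)⁻¹ = 1 := Matrix.mul_nonsing_inv _ hUdet
  set P := (Apᵀ * Ap)⁻¹ * Apᵀ with hP
  have hPA : P * Ap = 1 := by rw [hP, Matrix.mul_assoc, hMinv]
  have hMT : (Apᵀ * Ap)ᵀ = Apᵀ * Ap := by
    rw [Matrix.transpose_mul, Matrix.transpose_transpose]
  have hMinvT : ((Apᵀ * Ap)⁻¹)ᵀ = (Apᵀ * Ap)⁻¹ := by
    rw [Matrix.transpose_nonsing_inv, hMT]
  have hPPT : P * Pᵀ = (Apᵀ * Ap)⁻¹ := by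
    have h : P * Pᵀ = (Apᵀ * Ap)⁻¹ * ((Apᵀ * Ap) * (Apᵀ * Ap)⁻¹) := by
      rw [hP, Matrix.transpose_mul, hMinvT, Matrix.transpose_transpose]
      simp only [Matrix.mul_assoc]
    rw [h, hMinvR, Matrix.mul_one]
  have hTnorm : ∀ (B : Matrix (Fin m) (Fin n) ℝ), ‖Bᵀ‖ = ‖B‖ := fun B => by
    rw [← Matrix.conjTranspose_eq_transpose_of_trivial]
    exact Matrix.l2_opNorm_conjTranspose B
  have hPTnorm : ‖Pᵀ‖ = ‖P‖ := by
    rw [← Matrix.conjTranspose_eq_transpose_of_trivial]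
    exact Matrix.l2_opNorm_conjTranspose P
  have hMinvNorm : ‖(Apᵀ * Ap)⁻¹‖ ≤ ‖P‖ * ‖P‖ := by
    calc ‖(Apᵀ * Ap)⁻¹‖ = ‖P * Pᵀ‖ := by rw [hPPT]
      _ ≤ ‖P‖ * ‖Pᵀ‖ := Matrix.l2_opNorm_mul _ _
      _ = ‖P‖ * ‖P‖ := by rw [hPTnorm]
  have h1le : (1 : ℝ) ≤ ‖P‖ * ‖Ap‖ := by
    calc (1 : ℝ) = ‖(1 : Matrix (Fin n) (Fin n) ℝ)‖ := CStarRing.norm_one.symm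
      _ = ‖P * Ap‖ := by rw [hPA]
      _ ≤ ‖P‖ * ‖Ap‖ := Matrix.l2_opNorm_mul _ _
  have hApPos : (0 : ℝ) < ‖Ap‖ := by
    rcases (norm_nonneg Ap).lt_or_eq with h | h
    · exact h
    · exfalso
      have hz : Ap = 0 := by rwa [eq_comm, norm_eq_zero] at h
      rw [hz, Matrix.mul_zero] at hPA
      exact one_ne_zero hPA.symm
  have hRinvR : R⁻¹ * R = 1 := Matrix.nonsing_inv_mul R hR
  have hRPos : (0 : ℝ) < ‖R‖ := by
    rcases (norm_nonneg R).lt_or_eq with h | h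
    · exact h
    · exfalso
      have hz : R = 0 := by rwa [eq_comm, norm_eq_zero] at h
      rw [hz, Matrix.mul_zero] at hRinvR
      exact one_ne_zero hRinvR.symm
  have hyhPos : 0 < e2norm yh := e2norm_pos hyne
  have hxhPos : 0 < e2norm xh := e2norm_pos hne
  have hPnn : (0 : ℝ) ≤ ‖P‖ := norm_nonneg _
  have hEnn : (0 : ℝ) ≤ ‖Ep‖ := norm_nonneg _
  have hRinn : (0 : ℝ) ≤ ‖R⁻¹‖ := norm_nonneg _
  -- ν facts
  have hν' : ν = e2norm yh / (‖R‖ * e2norm xh) := by rw [hν, hxh]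
  have hνle : ν ≤ 1 := by
    rw [hν]
    rw [div_le_one (by positivity)]
    exact e2norm_mulVec_le R xh
  refine ⟨hνle, ?_⟩
  -- the key algebraic identity
  set r := b - (Ap + Ep) *ᵥ yh with hr
  have key : (Apᵀ * Ap) *ᵥ (ys - yh) = (Apᵀ * Ep) *ᵥ yh - Epᵀ *ᵥ r := by
    have h2 := hyh
    simp only [Matrix.transpose_add, Matrix.add_mul, Matrix.mul_add, Matrix.add_mulVec,
      Matrix.mulVec_add, Matrix.mulVec_sub, Matrix.mulVec_mulVec, hr] at h2 ⊢
    funext i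
    have h2i := congrFun h2 i
    have h1i := congrFun hys i
    simp only [Pi.add_apply, Pi.sub_apply] at h2i h1i ⊢
    linarith
  have hid : ys - yh =
      ((Apᵀ * Ap)⁻¹ * (Apᵀ * Ep)) *ᵥ yh - ((Apᵀ * Ap)⁻¹ * Epᵀ) *ᵥ r := by
    have h := congrArg (fun v => (Apᵀ * Ap)⁻¹ *ᵥ v) key
    simp only [Matrix.mulVec_mulVec, Matrix.mulVec_sub] at h
    rw [hMinv] at h
    simp only [Matrix.one_mulVec] at h
    exact h
  have hPE : ‖(Apᵀ * Ap)⁻¹ * (Apᵀ * Ep)‖ ≤ ‖P‖ * ‖Ep‖ := by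
    rw [← Matrix.mul_assoc, ← hP]
    exact Matrix.l2_opNorm_mul _ _
  -- residual bound
  have hrbound : e2norm r ≤ e2norm (b - Ap *ᵥ yh) + ‖Ep‖ * e2norm yh := by
    have : r = (b - Ap *ᵥ yh) - Ep *ᵥ yh := by
      rw [hr, Matrix.add_mulVec, sub_sub]
    rw [this]
    refine (e2norm_sub_le _ _).trans ?_
    exact add_le_add_right (e2norm_mulVec_le Ep yh) _
  -- norm bound on ys - yh
  have hbound : e2norm (ys - yh) ≤
      ‖P‖ * ‖Ep‖ * e2norm yh
        + ‖P‖ * ‖P‖ * ‖Ep‖ * (e2norm (b - Ap *ᵥ yh) + ‖Ep‖ * e2norm yh) := by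
    rw [hid]
    refine (e2norm_sub_le _ _).trans (add_le_add ?_ ?_)
    · calc e2norm (((Apᵀ * Ap)⁻¹ * (Apᵀ * Ep)) *ᵥ yh)
          ≤ ‖(Apᵀ * Ap)⁻¹ * (Apᵀ * Ep)‖ * e2norm yh := e2norm_mulVec_le _ _
        _ ≤ ‖P‖ * ‖Ep‖ * e2norm yh :=
            mul_le_mul_of_nonneg_right hPE hyhPos.le
    · calc e2norm (((Apᵀ * Ap)⁻¹ * Epᵀ) *ᵥ r) ≤ ‖(Apᵀ * Ap)⁻¹ * Epᵀ‖ * e2norm r :=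
            e2norm_mulVec_le _ _
        _ ≤ ‖(Apᵀ * Ap)⁻¹‖ * ‖Epᵀ‖ * e2norm r := by
            exact mul_le_mul_of_nonneg_right (Matrix.l2_opNorm_mul _ _) (e2norm_nonneg _)
        _ = ‖(Apᵀ * Ap)⁻¹‖ * ‖Ep‖ * e2norm r := by rw [hTnorm]
        _ ≤ ‖P‖ * ‖P‖ * ‖Ep‖ * e2norm r :=
            mul_le_mul_of_nonneg_right
              (mul_le_mul_of_nonneg_right hMinvNorm hEnn) (e2norm_nonneg r)
        _ ≤ ‖P‖ * ‖P‖ * ‖Ep‖ * (e2norm (b - Ap *ᵥ yh) + ‖Ep‖ * e2norm yh) := by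
            have h0 : (0 : ℝ) ≤ ‖P‖ * ‖P‖ * ‖Ep‖ := by positivity
            exact mul_le_mul_of_nonneg_left hrbound h0
  -- transfer to x variables
  have hxsd : xs - xh = R⁻¹ *ᵥ (ys - yh) := by
    have h1 : xs = R⁻¹ *ᵥ ys := by
      rw [← hxs, Matrix.mulVec_mulVec, hRinvR, Matrix.one_mulVec]
    have h2 : xh = R⁻¹ *ᵥ yh := by
      rw [← hxh, Matrix.mulVec_mulVec, hRinvR, Matrix.one_mulVec]
    rw [h1, h2, ← Matrix.mulVec_sub]
  have hxbound : e2norm (xs - xh) ≤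
      ‖R⁻¹‖ * (‖P‖ * ‖P‖ * ‖Ep‖ *
        (e2norm (b - Ap *ᵥ yh) + ‖Ap‖ * e2norm yh + ‖Ep‖ * e2norm yh)) := by
    rw [hxsd]
    refine (e2norm_mulVec_le _ _).trans ?_
    refine mul_le_mul_of_nonneg_left (hbound.trans ?_) hRinn
    have hynn := hyhPos.le
    have hrnn := e2norm_nonneg (b - Ap *ᵥ yh)
    nlinarith [mul_le_mul_of_nonneg_right h1le (mul_nonneg (mul_nonneg hPnn hEnn) hynn)]
  -- final computation
  have hRHS : κR * ν * κAp^2 * ε * (e2norm (b - Ap *ᵥ yh) / (‖Ap‖ * e2norm yh) + 1 + ε)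
      = ‖R⁻¹‖ * (‖P‖ * ‖P‖ * ‖Ep‖ *
          (e2norm (b - Ap *ᵥ yh) + ‖Ap‖ * e2norm yh + ‖Ep‖ * e2norm yh)) / e2norm xh := by
    have hR0 : ‖R‖ ≠ 0 := ne_of_gt hRPos
    have hA0 : ‖Ap‖ ≠ 0 := ne_of_gt hApPos
    have hy0 : e2norm yh ≠ 0 := ne_of_gt hyhPos
    have hx0 : e2norm xh ≠ 0 := ne_of_gt hxhPos
    rw [hκR, hν', hκAp, hε]
    exact rhs_eq _ _ _ _ _ _ _ _ hR0 hA0 hy0 hx0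
  rw [hRHS]
  gcongr
end

section
/- Let A ∈ ℝ^{m×n} have rank n with thin QR factorization A = Q R (Q ∈ ℝ^{m×n}, QᵀQ = Iₙ, R invertible), let S ∈ ℝ^{c×m} and 𝓕 ∈ ℝ^{m×m} orthogonal, suppose As := S𝓕A has rank n with thin QR factorization As = Qs Rs, and set A_p := A Rs⁻¹. Then σ_i(S𝓕Q) = 1/σ_{n-i+1}(A_p) for 1 ≤ i ≤ n, and consequently κ(S𝓕Q) = κ(A_p). -/
open Matrix
open scoped Matrix.Norms.L2Operator

open Polynomial in
private lemma charpoly_conj' {k : ℕ} (P P' B : Matrix (Fin k) (Fin k) ℝ) (h1 : P * P' = 1) :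
    (P * B * P').charpoly = B.charpoly := by
  have hmap : ∀ X Y : Matrix (Fin k) (Fin k) ℝ,
      (X * Y).map (C : ℝ →+* ℝ[X]) = X.map C * Y.map C := fun X Y => Matrix.map_mul
  have hcomm : Commute (scalar (Fin k) (X : ℝ[X])) (P.map C) :=
    scalar_commute _ (fun r => Commute.all _ _) _
  have key : charmatrix (P * B * P') = P.map C * charmatrix B * P'.map C := by
    unfold charmatrix
    simp only [RingHom.mapMatrix_apply]
    rw [Matrix.mul_sub, Matrix.sub_mul, ← hmap, ← hmap]
    congr 1
    rw [← hcomm.eq, mul_assoc, ← hmap, h1]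
    simp
  rw [Matrix.charpoly, key, Matrix.det_mul, Matrix.det_mul, mul_right_comm,
    ← Matrix.det_mul, ← hmap, h1]
  simp [Matrix.charpoly]

open Polynomial in
private lemma charpoly_diag' {k : ℕ} (d : Fin k → ℝ) :
    (Matrix.diagonal d).charpoly = ∏ i, (X - C (d i)) := by
  unfold Matrix.charpoly charmatrix
  simp only [RingHom.mapMatrix_apply, scalar_apply]
  rw [Matrix.diagonal_map (by simp), Matrix.diagonal_sub, Matrix.det_diagonal]

open Polynomial in
private lemma herm_charpoly {k : ℕ} {B : Matrix (Fin k) (Fin k) ℝ} (hB : B.IsHermitian) :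
    B.charpoly = ∏ i, (X - C (hB.eigenvalues i)) := by
  have hspec := hB.spectral_theorem
  set U : Matrix (Fin k) (Fin k) ℝ :=
    (Matrix.IsHermitian.eigenvectorUnitary hB : Matrix (Fin k) (Fin k) ℝ) with hUdef
  have hU : U * star U = 1 :=
    (Matrix.mem_unitaryGroup_iff).mp (Matrix.IsHermitian.eigenvectorUnitary hB).2
  have hdg : diagonal (RCLike.ofReal ∘ hB.eigenvalues) = diagonal hB.eigenvalues := by congr 1
  conv_lhs => rw [hspec, hdg]
  change (U * diagonal hB.eigenvalues * star U).charpoly = _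
  rw [charpoly_conj' _ _ _ hU, charpoly_diag']

open Polynomial in
private lemma eig_roots {k : ℕ} {B : Matrix (Fin k) (Fin k) ℝ} (hB : B.IsHermitian) :
    B.charpoly.roots = Finset.univ.val.map hB.eigenvalues := by
  rw [herm_charpoly hB, Finset.prod_eq_multiset_prod,
    show Multiset.map (fun i => X - C (hB.eigenvalues i)) Finset.univ.val
      = Multiset.map (fun a => X - C a) (Multiset.map hB.eigenvalues Finset.univ.val) from
      by rw [Multiset.map_map]; rfl,
    roots_multiset_prod_X_sub_C]

open Polynomial in
private lemma roots_inv {k : ℕ} {B B' : Matrix (Fin k) (Fin k) ℝ} (hB : B.IsHermitian)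
    (hBC : B * B' = 1) (hCB : B' * B = 1) :
    B'.charpoly.roots = B.charpoly.roots.map (·⁻¹) := by
  set U : Matrix (Fin k) (Fin k) ℝ :=
    (Matrix.IsHermitian.eigenvectorUnitary hB : Matrix (Fin k) (Fin k) ℝ)
  have hU : U * star U = 1 :=
    (Matrix.mem_unitaryGroup_iff).mp (Matrix.IsHermitian.eigenvectorUnitary hB).2
  have hU' : star U * U = 1 :=
    (Matrix.mem_unitaryGroup_iff').mp (Matrix.IsHermitian.eigenvectorUnitary hB).2
  have hdg : diagonal (RCLike.ofReal ∘ hB.eigenvalues) = diagonal hB.eigenvalues := by congr 1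
  have hspec : B = U * diagonal hB.eigenvalues * star U := by
    rw [← hdg]; exact hB.spectral_theorem
  have hdet : IsUnit B.det := (Matrix.isUnit_iff_isUnit_det B).mp ⟨⟨B, B', hBC, hCB⟩, rfl⟩
  have hev : ∀ i, hB.eigenvalues i ≠ 0 := by
    intro i hi
    rw [hB.det_eq_prod_eigenvalues] at hdet
    have hdet' : IsUnit (∏ j, hB.eigenvalues j) := by simpa using hdet
    have h0 : (∏ j, hB.eigenvalues j) = 0 :=
      Finset.prod_eq_zero (Finset.mem_univ i) (by simpa using hi)
    rw [h0] at hdet'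
    exact not_isUnit_zero hdet'
  have hDD : ∀ x : Matrix (Fin k) (Fin k) ℝ,
      diagonal hB.eigenvalues * (diagonal (fun i => (hB.eigenvalues i)⁻¹) * x) = x := by
    intro x
    rw [← Matrix.mul_assoc, Matrix.diagonal_mul_diagonal,
      show (fun i => hB.eigenvalues i * (hB.eigenvalues i)⁻¹) = fun _ => (1:ℝ) from
        funext fun i => mul_inv_cancel₀ (hev i),
      Matrix.diagonal_one, Matrix.one_mul]
  have hUx : ∀ x : Matrix (Fin k) (Fin k) ℝ, star U * (U * x) = x := by
    intro x; rw [← Matrix.mul_assoc, hU', Matrix.one_mul]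
  have hCeq : B' = U * diagonal (fun i => (hB.eigenvalues i)⁻¹) * star U := by
    have h1 : B⁻¹ = B' := Matrix.inv_eq_right_inv hBC
    have h2 : B⁻¹ = U * diagonal (fun i => (hB.eigenvalues i)⁻¹) * star U := by
      apply Matrix.inv_eq_right_inv
      have key : (U * diagonal hB.eigenvalues * star U) *
          (U * diagonal (fun i => (hB.eigenvalues i)⁻¹) * star U) = 1 := by
        simp only [Matrix.mul_assoc]
        rw [hUx, hDD, hU]
      rw [← hspec] at key
      exact key
    rw [← h1, h2]
  rw [hCeq, charpoly_conj' _ _ _ hU, charpoly_diag', eig_roots hB, Finset.prod_eq_multiset_prod,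
    show Multiset.map (fun i => X - C ((hB.eigenvalues i)⁻¹)) Finset.univ.val
      = Multiset.map (fun a => X - C a)
          (Multiset.map (fun i => (hB.eigenvalues i)⁻¹) Finset.univ.val) from
      by rw [Multiset.map_map]; rfl,
    roots_multiset_prod_X_sub_C, Multiset.map_map]
  rfl

private lemma sort_inv' (s : Multiset ℝ) (hpos : ∀ x ∈ s, 0 < x) :
    (s.map (·⁻¹)).sort (· ≥ ·) = ((s.sort (· ≥ ·)).map (·⁻¹)).reverse := by
  apply fun hp h1 h2 => List.Perm.eq_of_pairwise' (r := (· ≥ · : ℝ → ℝ → Prop)) h1 h2 hp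
  · rw [← Multiset.coe_eq_coe, Multiset.sort_eq]
    have h : ((((s.sort (· ≥ ·)).map (·⁻¹)).reverse : List ℝ) : Multiset ℝ)
        = (((s.sort (· ≥ ·)).map (·⁻¹) : List ℝ) : Multiset ℝ) := by
      rw [Multiset.coe_eq_coe]
      exact (List.reverse_perm _)
    rw [h, ← Multiset.map_coe, Multiset.sort_eq]
  · exact Multiset.pairwise_sort _ _
  · rw [List.pairwise_reverse]
    rw [List.pairwise_map]
    have hs := Multiset.pairwise_sort s (· ≥ ·)
    apply List.Pairwise.imp_of_mem ?_ hs
    intro a b ha hb hab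
    have hpa : 0 < a := hpos a (by rw [← Multiset.sort_eq s (· ≥ ·)]; exact ha)
    have hpb : 0 < b := hpos b (by rw [← Multiset.sort_eq s (· ≥ ·)]; exact hb)
    simp only [ge_iff_le]
    exact inv_anti₀ hpb hab

private lemma mul_helper1 {k : ℕ} (M N : Matrix (Fin k) (Fin k) ℝ) (h : N * M = 1) :
    N * (M * Mᴴ) * M = Mᴴ * M := by
  rw [← Matrix.mul_assoc]
  rw [h, Matrix.one_mul]

private lemma mul_helper2 {k : ℕ} (M N : Matrix (Fin k) (Fin k) ℝ) (hMN : M * N = 1)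
    (hNM : N * M = 1) : (M * Mᴴ) * (Nᴴ * N) = 1 ∧ (Nᴴ * N) * (M * Mᴴ) = 1 := by
  have hMN' : Mᴴ * Nᴴ = 1 := by
    rw [← Matrix.conjTranspose_mul, hNM, Matrix.conjTranspose_one]
  have hNM' : Nᴴ * Mᴴ = 1 := by
    rw [← Matrix.conjTranspose_mul, hMN, Matrix.conjTranspose_one]
  constructor
  · rw [Matrix.mul_assoc, ← Matrix.mul_assoc Mᴴ, hMN', Matrix.one_mul, hMN]
  · rw [Matrix.mul_assoc, ← Matrix.mul_assoc N, hNM, Matrix.one_mul, hNM']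

private lemma getD_rev_map_inv (L : List ℝ) (nn i : ℕ) (hL : L.length = nn + 1) (hi : i ≤ nn) :
    ((L.map (·⁻¹)).reverse).getD (nn - i) 0 = (L.getD i 0)⁻¹ := by
  have h1 : nn - i < (L.map (·⁻¹)).reverse.length := by
    rw [List.length_reverse, List.length_map, hL]; omega
  have h2 : i < L.length := by omega
  rw [List.getD_eq_getElem _ _ h1, List.getD_eq_getElem _ _ h2, List.getElem_reverse,
    List.getElem_map, ← List.getD_eq_getElem L 0, ← List.getD_eq_getElem L 0]
  simp only [List.length_map, hL]
  rw [show nn + 1 - 1 - (nn - i) = i from by omega]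

private lemma sval_eq_roots {m n : ℕ} (M : Matrix (Fin m) (Fin n) ℝ) (j : Fin n) :
    sval M j = Real.sqrt ((((Mᴴ * M).charpoly.roots).sort (· ≥ ·)).getD j 0) := by
  unfold sval
  rw [eig_roots (Matrix.isHermitian_conjTranspose_mul_self M)]
  rfl

theorem stmt14 {m n c : ℕ} (A Q : Matrix (Fin m) (Fin (n+1)) ℝ)
    (Rm : Matrix (Fin (n+1)) (Fin (n+1)) ℝ)
    (hrank : A.rank = n + 1) (hQR : A = Q * Rm) (hQ : Qᵀ * Q = 1) (hRm : IsUnit Rm.det)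
    (S : Matrix (Fin c) (Fin m) ℝ) (Fm : Matrix (Fin m) (Fin m) ℝ) (hFm : Fmᵀ * Fm = 1)
    (As : Matrix (Fin c) (Fin (n+1)) ℝ) (hAs : As = S * Fm * A) (hAsrank : As.rank = n + 1)
    (Qs : Matrix (Fin c) (Fin (n+1)) ℝ) (Rs : Matrix (Fin (n+1)) (Fin (n+1)) ℝ)
    (hQsRs : As = Qs * Rs) (hQs : Qsᵀ * Qs = 1) (hRs : IsUnit Rs.det)
    (Ap : Matrix (Fin m) (Fin (n+1)) ℝ) (hAp : Ap = A * Rs⁻¹) :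
    (∀ i : Fin (n+1), sval (S * Fm * Q) i = 1 / sval Ap i.rev) ∧
    condNum (S * Fm * Q) = condNum Ap := by
  classical
  obtain ⟨M, hMdef⟩ : ∃ M, M = Rs * Rm⁻¹ := ⟨_, rfl⟩
  obtain ⟨N, hNdef⟩ : ∃ N, N = Rm * Rs⁻¹ := ⟨_, rfl⟩
  have hRm1 : Rm * Rm⁻¹ = 1 := Matrix.mul_nonsing_inv _ hRm
  have hRm2 : Rm⁻¹ * Rm = 1 := Matrix.nonsing_inv_mul _ hRm
  have hRs1 : Rs * Rs⁻¹ = 1 := Matrix.mul_nonsing_inv _ hRs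
  have hRs2 : Rs⁻¹ * Rs = 1 := Matrix.nonsing_inv_mul _ hRs
  have hMN : M * N = 1 := by
    rw [hMdef, hNdef, Matrix.mul_assoc, ← Matrix.mul_assoc Rm⁻¹, hRm2, Matrix.one_mul, hRs1]
  have hNM : N * M = 1 := by
    rw [hMdef, hNdef, Matrix.mul_assoc, ← Matrix.mul_assoc Rs⁻¹, hRs2, Matrix.one_mul, hRm1]
  have hQsRsEq : Qs * Rs = (S * Fm * Q) * Rm := by
    rw [← hQsRs, hAs, hQR, Matrix.mul_assoc (S * Fm), ← Matrix.mul_assoc]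
  have hSFQ : S * Fm * Q = Qs * M := by
    rw [hMdef, ← Matrix.mul_assoc, hQsRsEq, Matrix.mul_assoc (S * Fm * Q) Rm Rm⁻¹, hRm1,
      Matrix.mul_one]
  have hApQ : Ap = Q * N := by
    rw [hAp, hQR, Matrix.mul_assoc, hNdef]
  have hQsH : Qsᴴ * Qs = 1 := by
    rw [Matrix.conjTranspose_eq_transpose_of_trivial]; exact hQs
  have hQH : Qᴴ * Q = 1 := by
    rw [Matrix.conjTranspose_eq_transpose_of_trivial]; exact hQ
  have hG1 : (S * Fm * Q)ᴴ * (S * Fm * Q) = Mᴴ * M := by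
    rw [hSFQ, Matrix.conjTranspose_mul, Matrix.mul_assoc, ← Matrix.mul_assoc Qsᴴ, hQsH,
      Matrix.one_mul]
  have hG2 : Apᴴ * Ap = Nᴴ * N := by
    rw [hApQ, Matrix.conjTranspose_mul, Matrix.mul_assoc, ← Matrix.mul_assoc Qᴴ, hQH,
      Matrix.one_mul]
  have hcp : (Mᴴ * M).charpoly = (M * Mᴴ).charpoly := by
    rw [← mul_helper1 M N hNM]; exact charpoly_conj' _ _ _ hNM
  obtain ⟨hInv1, hInv2⟩ := mul_helper2 M N hMN hNM
  have hroots : (Apᴴ * Ap).charpoly.roots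
      = (((S * Fm * Q)ᴴ * (S * Fm * Q)).charpoly.roots).map (·⁻¹) := by
    rw [hG1, hG2, hcp,
      roots_inv (Matrix.isHermitian_mul_conjTranspose_self M) hInv1 hInv2]
  obtain ⟨E, hEdef⟩ : ∃ E : Multiset ℝ,
      E = ((S * Fm * Q)ᴴ * (S * Fm * Q)).charpoly.roots := ⟨_, rfl⟩
  have hMdet : IsUnit (Mᴴ * M).det := by
    rw [Matrix.det_mul, Matrix.det_conjTranspose]
    have hM : IsUnit M.det := by
      rw [hMdef, Matrix.det_mul]
      exact hRs.mul (Matrix.isUnit_nonsing_inv_det Rm hRm)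
    exact hM.mul hM
  have hpos : ∀ x ∈ E, 0 < x := by
    intro x hx
    rw [hEdef, hG1, eig_roots (Matrix.isHermitian_conjTranspose_mul_self M)] at hx
    obtain ⟨i, _, rfl⟩ := Multiset.mem_map.mp hx
    have hnonneg : 0 ≤ (Matrix.isHermitian_conjTranspose_mul_self M).eigenvalues i :=
      Matrix.eigenvalues_conjTranspose_mul_self_nonneg M i
    rcases lt_or_eq_of_le hnonneg with h | h
    · exact h
    · exfalso
      rw [(Matrix.isHermitian_conjTranspose_mul_self M).det_eq_prod_eigenvalues] at hMdet
      have hdet' : IsUnit (∏ j, (Matrix.isHermitian_conjTranspose_mul_self M).eigenvalues j) := by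
        simpa using hMdet
      have h0 : (∏ j, (Matrix.isHermitian_conjTranspose_mul_self M).eigenvalues j) = 0 :=
        Finset.prod_eq_zero (Finset.mem_univ i) h.symm
      rw [h0] at hdet'
      exact not_isUnit_zero hdet'
  obtain ⟨L, hLdef⟩ : ∃ L : List ℝ, L = E.sort (· ≥ ·) := ⟨_, rfl⟩
  have hcard : Multiset.card E = n + 1 := by
    rw [hEdef, hG1, eig_roots (Matrix.isHermitian_conjTranspose_mul_self M)]
    simp
  have hlen : L.length = n + 1 := by rw [hLdef, Multiset.length_sort, hcard]
  have hsorted : (E.map (·⁻¹)).sort (· ≥ ·) = (L.map (·⁻¹)).reverse := by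
    rw [hLdef]; exact sort_inv' E hpos
  have key : ∀ i : Fin (n+1), sval (S * Fm * Q) i = 1 / sval Ap i.rev := by
    intro i
    have hi : (i : ℕ) ≤ n := Nat.lt_succ_iff.mp i.isLt
    have hrev : (i.rev : ℕ) = n - i := by rw [Fin.val_rev]; omega
    rw [sval_eq_roots, sval_eq_roots, hroots, ← hEdef, ← hLdef, hsorted, hrev,
      getD_rev_map_inv L n i hlen hi, one_div, Real.sqrt_inv, inv_inv]
  refine ⟨key, ?_⟩
  unfold condNum
  rw [key 0, key (Fin.last n)]
  have h0 : (0 : Fin (n+1)).rev = Fin.last n := by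
    ext
    rw [Fin.val_rev]
    simp
  have hl : (Fin.last n).rev = 0 := by
    ext
    rw [Fin.val_rev]
    simp
  rw [h0, hl, one_div, one_div, inv_div_inv]
end
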